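/- arXiv:2605.09757 — 2 statements merged into one kernel-verified Lean document; each statement's English description precedes it below -/
import Mathlib

section
/- Suppose the noise-bound functions η^M_t : 𝒳 → [0,∞) (t ≥ 1) satisfy ℙ( for all x ∈ 𝒳 and all t ≥ 1: |Σ_{i=1}^t M_i (h_t(x))_i| ≤ η^M_t(x) ) ≥ 1−δ. Then ℙ( for all x ∈ 𝒳 and all t ≥ 1: |f(x) − μ_t(x)| ≤ B·σ̃_t(x) + η^M_t(x) ) ≥ 1−δ. -/
/-!
Write `h = h_t(x)` and `r = φ(x) - ∑ᵢ hᵢ φ(xᵢ)`. Then `f(x) - μ_t(x) = ⟪w, r⟫ - ∑ᵢ Mᵢ hᵢ`,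
and since `h` solves `(K_t + ρ² I) h = k_t(x)`, expanding `‖r‖²` gives
`‖r‖² = σ_t²(x) - ρ² ‖h‖²`, i.e. `‖r‖ = σ̃_t(x)`. Cauchy–Schwarz bounds the first term by
`B σ̃_t(x)`, so the event of the noise bound is contained in the event of the error bound.
-/

open MeasureTheory ProbabilityTheory Matrix Real
open scoped BigOperators ENNReal NNReal

noncomputable section

namespace KRR

/-- Euclidean 2-norm on `Fin t → ℝ`. -/
def twoNorm {t : ℕ} (v : Fin t → ℝ) : ℝ := Real.sqrt (∑ i, v i ^ 2)

/-- Maximum norm on `Fin t → ℝ` (the sup norm of the Pi type). -/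
def supNorm {t : ℕ} (v : Fin t → ℝ) : ℝ := ‖v‖

/-- Weighted norm `‖s‖_C = √(sᵀ C s)`. -/
def wNorm {t : ℕ} (C : Matrix (Fin t) (Fin t) ℝ) (v : Fin t → ℝ) : ℝ :=
  Real.sqrt (v ⬝ᵥ C.mulVec v)

/-- Spectral norm (maximal singular value, ℓ²-operator norm) of a square real matrix. -/
def specNorm {t : ℕ} (C : Matrix (Fin t) (Fin t) ℝ) : ℝ :=
  ‖LinearMap.toContinuousLinearMap (Matrix.toEuclideanLin C)‖

/-- Covering number of `X ⊆ ℝ^n` with grid constant `ζ`: the minimal cardinality of a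
finite subset of `X` such that every point of `X` is within distance `ζ` of it. -/
def covN {n : ℕ} (X : Set (EuclideanSpace ℝ (Fin n))) (ζ : ℝ) : ℕ :=
  sInf {m | ∃ S : Finset (EuclideanSpace ℝ (Fin n)), ↑S ⊆ X ∧ S.card = m ∧
    ∀ x ∈ X, ∃ y ∈ S, ‖x - y‖ ≤ ζ}

variable {E : Type*} {H : Type*} [NormedAddCommGroup H] [InnerProductSpace ℝ H]

/-- The kernel `k(x,x') = ⟪φ(x), φ(x')⟫`. -/
def ker (φ : E → H) (x y : E) : ℝ := inner ℝ (φ x) (φ y)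

/-- Gram matrix `K_t`. -/
def gram (φ : E → H) (xs : ℕ → E) (t : ℕ) : Matrix (Fin t) (Fin t) ℝ :=
  Matrix.of fun i j => ker φ (xs i) (xs j)

/-- The vector `k_t(x)`. -/
def kvec (φ : E → H) (xs : ℕ → E) (t : ℕ) (x : E) : Fin t → ℝ :=
  fun i => ker φ (xs i) x

/-- `h_t(x) = (K_t + ρ²I)⁻¹ k_t(x)`. -/
def hvec (φ : E → H) (xs : ℕ → E) (ρ : ℝ) (t : ℕ) (x : E) : Fin t → ℝ :=
  (gram φ xs t + ρ ^ 2 • (1 : Matrix (Fin t) (Fin t) ℝ))⁻¹ *ᵥ kvec φ xs t x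

/-- Posterior variance `σ_t²(x) = k(x,x) − k_t(x)ᵀ(K_t+ρ²I)⁻¹k_t(x)`. -/
def postVar (φ : E → H) (xs : ℕ → E) (ρ : ℝ) (t : ℕ) (x : E) : ℝ :=
  ker φ x x - kvec φ xs t x ⬝ᵥ hvec φ xs ρ t x

/-- `σ̃_t(x) = √(σ_t²(x) − ρ²‖h_t(x)‖₂²)`. -/
def sigTilde (φ : E → H) (xs : ℕ → E) (ρ : ℝ) (t : ℕ) (x : E) : ℝ :=
  Real.sqrt (postVar φ xs ρ t x - ρ ^ 2 * twoNorm (hvec φ xs ρ t x) ^ 2)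

/-- The unknown function `f(x) = ⟪w, φ(x)⟫`. -/
def ffun (φ : E → H) (w : H) (x : E) : ℝ := inner ℝ w (φ x)

/-- The KRR estimate `μ_t(x) = Σᵢ Yᵢ (h_t(x))ᵢ` with `Yᵢ = f(xᵢ) + Mᵢ`. -/
def muEst {Ω : Type*} (φ : E → H) (xs : ℕ → E) (ρ : ℝ) (w : H)
    (M : ℕ → Ω → ℝ) (t : ℕ) (x : E) (ω : Ω) : ℝ :=
  ∑ i : Fin t, (ffun φ w (xs i) + M i ω) * hvec φ xs ρ t x i

/-- `β_{1,t} = 2 ln(4 π_t Z(ζ_t,X)/δ)`. -/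
def beta1 {n : ℕ} (X : Set (EuclideanSpace ℝ (Fin n))) (pis ζ : ℕ → ℝ) (δ : ℝ) (t : ℕ) : ℝ :=
  2 * Real.log (4 * pis t * (covN X (ζ t) : ℝ) / δ)

/-- `β_{2,t} = 2 ln(4 π_t t/δ)`. -/
def beta2 (pis : ℕ → ℝ) (δ : ℝ) (t : ℕ) : ℝ :=
  2 * Real.log (4 * pis t * (t : ℝ) / δ)

/-- `a_{1,t} = √(L/(2ρ²)) ζ_t^{p/2}`. -/
def a1 (L ρ p : ℝ) (ζ : ℕ → ℝ) (t : ℕ) : ℝ :=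
  Real.sqrt (L / (2 * ρ ^ 2)) * ζ t ^ (p / 2)

/-- `a_{2,t} = t L ζ_t^p`. -/
def a2 (L p : ℝ) (ζ : ℕ → ℝ) (t : ℕ) : ℝ :=
  (t : ℝ) * L * ζ t ^ p

/-- `Δ_t(σ) = √(β_{1,t}) σ a_{1,t} + √(β_{2,t}) σ a_{2,t}`. -/
def Δt {n : ℕ} (X : Set (EuclideanSpace ℝ (Fin n))) (pis ζ : ℕ → ℝ) (δ L ρ p : ℝ)
    (t : ℕ) (σ : ℝ) : ℝ :=
  Real.sqrt (beta1 X pis ζ δ t) * σ * a1 L ρ p ζ t + Real.sqrt (beta2 pis δ t) * σ * a2 L p ζ t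

open scoped InnerProductSpace

section RegularizedGram

variable {ι : Type*} [Fintype ι] [DecidableEq ι]

theorem norm_sub_sum_smul_sq_of_mulVec_eq (v : ι → H) (y : H) (ρ : ℝ) (c : ι → ℝ)
    (hc : (Matrix.gram ℝ v + ρ ^ 2 • 1) *ᵥ c = fun i => ⟪v i, y⟫_ℝ) :
    ‖y - ∑ i, c i • v i‖ ^ 2 =
      ⟪y, y⟫_ℝ - (fun i => ⟪v i, y⟫_ℝ) ⬝ᵥ c - ρ ^ 2 * ∑ i, c i ^ 2 := by
  set s := ∑ i, c i • v i
  have hys : ⟪y, s⟫_ℝ = (fun i => ⟪v i, y⟫_ℝ) ⬝ᵥ c := by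
    simp only [s, inner_sum, real_inner_smul_right, dotProduct, real_inner_comm, mul_comm]
  have hss : ⟪s, s⟫_ℝ = (fun i => ⟪v i, y⟫_ℝ) ⬝ᵥ c - ρ ^ 2 * ∑ i, c i ^ 2 := by
    have h := congrArg (c ⬝ᵥ ·) hc
    simp only [Matrix.add_mulVec, dotProduct_add, Matrix.smul_mulVec, Matrix.one_mulVec,
      dotProduct_smul, smul_eq_mul] at h
    rw [← star_trivial c, star_dotProduct_gram_mulVec, star_trivial] at h
    rw [dotProduct_comm, ← h]
    simp only [dotProduct, sq]
    ring
  rw [← real_inner_self_eq_norm_sq, inner_sub_sub_self, real_inner_comm y s, hys, hss]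
  ring

end RegularizedGram

lemma posDef_gram_add_smul_one (φ : E → H) (xs : ℕ → E) {ρ : ℝ} (hρ : ρ ≠ 0) (t : ℕ) :
    (gram φ xs t + ρ ^ 2 • (1 : Matrix (Fin t) (Fin t) ℝ)).PosDef :=
  Matrix.PosDef.posSemidef_add (Matrix.posSemidef_gram ℝ _)
    (Matrix.PosDef.smul Matrix.PosDef.one (pow_two_pos_of_ne_zero hρ))

lemma mulVec_hvec (φ : E → H) (xs : ℕ → E) {ρ : ℝ} (hρ : ρ ≠ 0) (t : ℕ) (x : E) :
    (gram φ xs t + ρ ^ 2 • (1 : Matrix (Fin t) (Fin t) ℝ)) *ᵥ hvec φ xs ρ t x =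
      kvec φ xs t x := by
  rw [hvec, Matrix.mulVec_mulVec, Matrix.mul_nonsing_inv _
    ((Matrix.isUnit_iff_isUnit_det _).mp (posDef_gram_add_smul_one φ xs hρ t).isUnit),
    Matrix.one_mulVec]

lemma sigTilde_eq_norm (φ : E → H) (xs : ℕ → E) {ρ : ℝ} (hρ : ρ ≠ 0) (t : ℕ) (x : E) :
    sigTilde φ xs ρ t x = ‖φ x - ∑ i, hvec φ xs ρ t x i • φ (xs i)‖ := by
  have h := norm_sub_sum_smul_sq_of_mulVec_eq (fun i : Fin t => φ (xs i)) (φ x) ρ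
    (hvec φ xs ρ t x) (mulVec_hvec φ xs hρ t x)
  rw [sigTilde, twoNorm, Real.sq_sqrt (Finset.sum_nonneg fun i _ => sq_nonneg _), postVar,
    ker, ← Real.sqrt_sq (norm_nonneg _), h]
  rfl

section Estimate

variable {Ω : Type*} (φ : E → H) (xs : ℕ → E) (M : ℕ → Ω → ℝ) (t : ℕ) (x : E) (ω : Ω)

lemma ffun_sub_muEst (ρ : ℝ) (w : H) :
    ffun φ w x - muEst φ xs ρ w M t x ω =
      ⟪w, φ x - ∑ i, hvec φ xs ρ t x i • φ (xs i)⟫_ℝ -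
        ∑ i : Fin t, M i ω * hvec φ xs ρ t x i := by
  simp only [ffun, muEst, inner_sub_right, inner_sum, real_inner_smul_right, add_mul,
    Finset.sum_add_distrib, mul_comm]
  ring

lemma abs_ffun_sub_muEst_le {ρ : ℝ} (hρ : ρ ≠ 0) {B : ℝ} {w : H} (hw : ‖w‖ ≤ B) :
    |ffun φ w x - muEst φ xs ρ w M t x ω| ≤
      B * sigTilde φ xs ρ t x + |∑ i : Fin t, M i ω * hvec φ xs ρ t x i| := by
  set r := φ x - ∑ i, hvec φ xs ρ t x i • φ (xs i)
  rw [ffun_sub_muEst, sigTilde_eq_norm φ xs hρ]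
  calc _ ≤ |⟪w, r⟫_ℝ| + |∑ i : Fin t, M i ω * hvec φ xs ρ t x i| := abs_sub _ _
    _ ≤ ‖w‖ * ‖r‖ + |∑ i : Fin t, M i ω * hvec φ xs ρ t x i| := by
      gcongr
      exact abs_real_inner_le_norm w r
    _ ≤ B * ‖r‖ + |∑ i : Fin t, M i ω * hvec φ xs ρ t x i| := by gcongr

end Estimate

theorem stmt0_general
    {nx : ℕ}
    (X : Set (EuclideanSpace ℝ (Fin nx)))
    {H : Type*} [NormedAddCommGroup H] [InnerProductSpace ℝ H]
    (φ : EuclideanSpace ℝ (Fin nx) → H)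
    (xs : ℕ → EuclideanSpace ℝ (Fin nx))
    (ρ : ℝ) (hρ : 0 < ρ)
    (B : ℝ) (w : H) (hw : ‖w‖ ≤ B)
    {Ω : Type*} [MeasurableSpace Ω] (P : Measure Ω)
    (M : ℕ → Ω → ℝ)
    (δ : ℝ)
    (ηM : ℕ → EuclideanSpace ℝ (Fin nx) → ℝ)
    (hnoise : ENNReal.ofReal (1 - δ) ≤
      P {ω | ∀ x ∈ X, ∀ t : ℕ, 1 ≤ t →
        |∑ i : Fin t, M i ω * hvec φ xs ρ t x i| ≤ ηM t x}) :
    ENNReal.ofReal (1 - δ) ≤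
      P {ω | ∀ x ∈ X, ∀ t : ℕ, 1 ≤ t →
        |ffun φ w x - muEst φ xs ρ w M t x ω| ≤
          B * sigTilde φ xs ρ t x + ηM t x} :=
  hnoise.trans <| measure_mono fun ω hω x hx t ht =>
    (abs_ffun_sub_muEst_le φ xs M t x ω hρ.ne' hw).trans (add_le_add_right (hω x hx t ht) _)

/-- Lemma 1: if the noise-bound functions `η^M_t` satisfy the uniform
probabilistic noise bound, then the uniform error bound holds with
`η_t(x) = B σ̃_t(x) + η^M_t(x)`. -/
theorem stmt0
    {nx : ℕ} (hnx : 1 ≤ nx)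
    (X : Set (EuclideanSpace ℝ (Fin nx))) (hXne : X.Nonempty) (hXcpt : IsCompact X)
    {H : Type*} [NormedAddCommGroup H] [InnerProductSpace ℝ H] [CompleteSpace H]
    (φ : EuclideanSpace ℝ (Fin nx) → H)
    (xs : ℕ → EuclideanSpace ℝ (Fin nx)) (hxs : ∀ i, xs i ∈ X)
    (ρ : ℝ) (hρ : 0 < ρ)
    (B : ℝ) (hB : 0 ≤ B) (w : H) (hw : ‖w‖ ≤ B)
    {Ω : Type*} [MeasurableSpace Ω] (P : Measure Ω) [IsProbabilityMeasure P]
    (M : ℕ → Ω → ℝ) (hMmeas : ∀ i, Measurable (M i))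
    (δ : ℝ) (hδ : δ ∈ Set.Ioo (0 : ℝ) 1)
    (ηM : ℕ → EuclideanSpace ℝ (Fin nx) → ℝ) (hηM : ∀ t, ∀ x ∈ X, 0 ≤ ηM t x)
    (hnoise : ENNReal.ofReal (1 - δ) ≤
      P {ω | ∀ x ∈ X, ∀ t : ℕ, 1 ≤ t →
        |∑ i : Fin t, M i ω * hvec φ xs ρ t x i| ≤ ηM t x}) :
    ENNReal.ofReal (1 - δ) ≤
      P {ω | ∀ x ∈ X, ∀ t : ℕ, 1 ≤ t →
        |ffun φ w x - muEst φ xs ρ w M t x ω| ≤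
          B * sigTilde φ xs ρ t x + ηM t x} :=
  stmt0_general X φ xs ρ hρ B w hw P M δ ηM hnoise

end KRR
end
end

section
/- Let Φ be a real n×t matrix and ρ > 0, and set A := (I_n + ρ⁻²·ΦΦᵀ)⁻¹ (which exists since I_n + ρ⁻²ΦΦᵀ is positive definite). Then A − A² = ρ²·Φ·(ρ²I_t + ΦᵀΦ)⁻²·Φᵀ. -/
/-!
With `M = 1 + c • (Φ * Φᵀ)` one has `M⁻¹ - M⁻¹ ^ 2 = M⁻¹ (M - 1) M⁻¹ = c • M⁻¹ Φ Φᵀ M⁻¹`, and the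
push-through identity `M⁻¹ Φ = Φ (1 + c • (Φᵀ * Φ))⁻¹` moves both inverses to the `t × t` side.
For `c = ρ⁻²` the matrix `ρ² I_t + ΦᵀΦ` is `ρ² (1 + c • ΦᵀΦ)`, which accounts for the factor `ρ²`.
-/

open Matrix

noncomputable section

namespace Matrix

variable {m n α : Type*} [Fintype m] [Fintype n] [DecidableEq m] [DecidableEq n] [CommRing α]

theorem det_one_add_smul_mul_comm (c : α) (A : Matrix m n α) (B : Matrix n m α) :
    det (1 + c • (A * B)) = det (1 + c • (B * A)) := by
  simpa only [Matrix.smul_mul, Matrix.mul_smul] using det_one_add_mul_comm (c • A) B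

/- No invertibility is needed: by the Weinstein–Aronszajn identity either both inverses are
genuine or both are the junk value `0`. -/
theorem inv_one_add_smul_mul_mul_comm (c : α) (A : Matrix m n α) (B : Matrix n m α) :
    (1 + c • (A * B))⁻¹ * A = A * (1 + c • (B * A))⁻¹ := by
  by_cases h : IsUnit (1 + c • (A * B)).det
  · have h' : IsUnit (1 + c • (B * A)).det := det_one_add_smul_mul_comm c A B ▸ h
    have hcomm : (1 + c • (A * B)) * A = A * (1 + c • (B * A)) := by
      simp only [Matrix.add_mul, Matrix.mul_add, Matrix.one_mul, Matrix.mul_one, Matrix.smul_mul,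
        Matrix.mul_smul, Matrix.mul_assoc]
    calc (1 + c • (A * B))⁻¹ * A
        = (1 + c • (A * B))⁻¹ * (A * (1 + c • (B * A))) * (1 + c • (B * A))⁻¹ := by
          rw [Matrix.mul_assoc, Matrix.mul_assoc, mul_nonsing_inv _ h', Matrix.mul_one]
      _ = A * (1 + c • (B * A))⁻¹ := by
          rw [← hcomm, ← Matrix.mul_assoc, nonsing_inv_mul _ h, Matrix.one_mul]
  · have h' : ¬IsUnit (1 + c • (B * A)).det := det_one_add_smul_mul_comm c A B ▸ h
    rw [nonsing_inv_apply_not_isUnit _ h, nonsing_inv_apply_not_isUnit _ h', Matrix.zero_mul,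
      Matrix.mul_zero]

theorem inv_sub_inv_sq {M : Matrix m m α} (h : IsUnit M.det) :
    M⁻¹ - M⁻¹ ^ 2 = M⁻¹ * (M - 1) * M⁻¹ := by
  rw [Matrix.mul_sub, nonsing_inv_mul _ h, Matrix.mul_one, Matrix.sub_mul, Matrix.one_mul, sq]

theorem inv_sub_inv_sq_one_add_smul_mul (c : α) (A : Matrix m n α) (B : Matrix n m α)
    (h : IsUnit (1 + c • (A * B)).det) :
    (1 + c • (A * B))⁻¹ - (1 + c • (A * B))⁻¹ ^ 2 = c • (A * (1 + c • (B * A))⁻¹ ^ 2 * B) := by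
  rw [inv_sub_inv_sq h, add_sub_cancel_left, Matrix.mul_smul, Matrix.smul_mul]
  congr 1
  calc (1 + c • (A * B))⁻¹ * (A * B) * (1 + c • (A * B))⁻¹
      = ((1 + c • (A * B))⁻¹ * A) * (B * (1 + c • (A * B))⁻¹) := by
        simp only [Matrix.mul_assoc]
    _ = A * (1 + c • (B * A))⁻¹ ^ 2 * B := by
        rw [inv_one_add_smul_mul_mul_comm, ← inv_one_add_smul_mul_mul_comm c B A, sq]
        simp only [Matrix.mul_assoc]

end Matrix

/-- for `A = (Iₙ + ρ⁻²ΦΦᵀ)⁻¹` one has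
`A − A² = ρ² Φ (ρ²I_t + ΦᵀΦ)⁻² Φᵀ`. -/
theorem stmt15
    {n t : ℕ} (Φ : Matrix (Fin n) (Fin t) ℝ) (ρ : ℝ) (hρ : 0 < ρ) :
    ((1 : Matrix (Fin n) (Fin n) ℝ) + (ρ ^ 2)⁻¹ • (Φ * Φᵀ))⁻¹ -
        ((1 : Matrix (Fin n) (Fin n) ℝ) + (ρ ^ 2)⁻¹ • (Φ * Φᵀ))⁻¹ ^ 2 =
      ρ ^ 2 • (Φ * (ρ ^ 2 • (1 : Matrix (Fin t) (Fin t) ℝ) + Φᵀ * Φ)⁻¹ ^ 2 * Φᵀ) := by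
  have hρ2 : ρ ^ 2 ≠ 0 := by positivity
  have hB : IsUnit (1 + (ρ ^ 2)⁻¹ • (Φ * Φᵀ)).det := by
    have hΦ : (Φ * Φᵀ).PosSemidef := by
      simpa using posSemidef_self_mul_conjTranspose Φ
    exact (isUnit_iff_isUnit_det _).mp (PosDef.one.add_posSemidef (hΦ.smul (by positivity))).isUnit
  have hD : IsUnit (1 + (ρ ^ 2)⁻¹ • (Φᵀ * Φ)).det := det_one_add_smul_mul_comm _ Φ Φᵀ ▸ hB
  have := invertibleOfNonzero hρ2
  have hC : ρ ^ 2 • (1 : Matrix (Fin t) (Fin t) ℝ) + Φᵀ * Φ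
      = ρ ^ 2 • (1 + (ρ ^ 2)⁻¹ • (Φᵀ * Φ)) := by
    rw [smul_add, smul_smul, mul_inv_cancel₀ hρ2, one_smul]
  rw [inv_sub_inv_sq_one_add_smul_mul _ _ _ hB, hC, Matrix.inv_smul _ _ hD, invOf_eq_inv, smul_pow,
    Matrix.mul_smul, Matrix.smul_mul, smul_smul]
  congr 1
  field_simp
end
end
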